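/- If the updates are bounded by decreasing step sizes, delayed iterates converge to the auxiliary iterate: suppose ‖U_q^t‖ ≤ η_t G for all q, t, where η_t → 0 is decreasing and G ≥ 0, and W^c, W_p^c are defined as sums of updates with delays bounded by s (0 ≤ (c-1) - τ_p^q(c) ≤ s). Then ‖W^c - W_p^c‖ ≤ P·s·η_{c-s}·G, and hence lim_{c→∞} max_p ‖W^c - W_p^c‖ = 0. -/

import Mathlib

/-!
For each machine `q`, `W^c - W_p^c` collects the at most `s` updates `U_q^t` with
`c - s ≤ t < c`; since `η` is decreasing each has norm at most `η_{c-s} G`. This bound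
tends to `0` with `η`, and squeezes the maximum over `p`.
-/

open Filter

section DelayedSums

variable {E : Type*}

theorem norm_sum_Ico_le_of_antitone [SeminormedAddCommGroup E] {f : ℕ → E} {b : ℕ → ℝ}
    (hb : Antitone b) (hf : ∀ t, ‖f t‖ ≤ b t) {a c s : ℕ} (hwin : c - a ≤ s)
    (hb0 : 0 ≤ b (c - s)) :
    ‖∑ t ∈ Finset.Ico a c, f t‖ ≤ s * b (c - s) := by
  have hterm : ∀ t ∈ Finset.Ico a c, ‖f t‖ ≤ b (c - s) := fun t ht =>
    (hf t).trans (hb (by have := (Finset.mem_Ico.mp ht).1; omega))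
  calc ‖∑ t ∈ Finset.Ico a c, f t‖
      ≤ ∑ _t ∈ Finset.Ico a c, b (c - s) := norm_sum_le_of_le _ hterm
    _ = (Finset.Ico a c).card * b (c - s) := by rw [Finset.sum_const, nsmul_eq_mul]
    _ ≤ s * b (c - s) := by
      gcongr
      rw [Nat.card_Ico]
      exact_mod_cast hwin

theorem sum_sum_range_sub_sum_sum_range [AddCommGroup E] {ι : Type*} [Fintype ι]
    (U : ι → ℕ → E) {k : ι → ℕ} {c : ℕ} (hk : ∀ q, k q ≤ c) :
    ∑ q, ∑ t ∈ Finset.range c, U q t - ∑ q, ∑ t ∈ Finset.range (k q), U q t =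
      ∑ q, ∑ t ∈ Finset.Ico (k q) c, U q t := by
  rw [← Finset.sum_sub_distrib]
  exact Finset.sum_congr rfl fun q _ => (Finset.sum_Ico_eq_sub _ (hk q)).symm

theorem norm_sum_sum_range_sub_sum_sum_range_le [SeminormedAddCommGroup E] {ι : Type*}
    [Fintype ι] {U : ι → ℕ → E} {b : ℕ → ℝ} (hb : Antitone b) (hU : ∀ q t, ‖U q t‖ ≤ b t)
    {k : ι → ℕ} {c s : ℕ} (hk : ∀ q, k q ≤ c) (hdelay : ∀ q, c - k q ≤ s)
    (hb0 : 0 ≤ b (c - s)) :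
    ‖∑ q, ∑ t ∈ Finset.range c, U q t - ∑ q, ∑ t ∈ Finset.range (k q), U q t‖ ≤
      Fintype.card ι * (s * b (c - s)) := by
  rw [sum_sum_range_sub_sum_sum_range U hk]
  calc ‖∑ q, ∑ t ∈ Finset.Ico (k q) c, U q t‖
      ≤ ∑ _q : ι, s * b (c - s) := norm_sum_le_of_le _ fun q _ =>
        norm_sum_Ico_le_of_antitone hb (hU q) (hdelay q) hb0
    _ = Fintype.card ι * (s * b (c - s)) := by
      rw [Finset.sum_const, Finset.card_univ, nsmul_eq_mul]

end DelayedSums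

/-- With updates bounded by decreasing step sizes, delayed local iterates
converge to the auxiliary iterate: `‖W^c - W_p^c‖ ≤ P·s·η_{c-s}·G` and the
maximal disagreement tends to `0`. -/
theorem stmt12 {n P : ℕ} (hP : 0 < P)
    (U : Fin P → ℕ → EuclideanSpace ℝ (Fin n))
    (W0 : EuclideanSpace ℝ (Fin n)) (τ : Fin P → Fin P → ℕ → ℕ)
    (s : ℕ) (η : ℕ → ℝ) (G : ℝ) (hG : 0 ≤ G) (hη : ∀ t, 0 ≤ η t)
    (hdec : Antitone η) (hη0 : Tendsto η atTop (nhds 0))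
    (hU : ∀ q t, ‖U q t‖ ≤ η t * G)
    (hτ : ∀ p q c, s < c → τ p q c ≤ c - 1 ∧ (c - 1) - τ p q c ≤ s) :
    (∀ c, s < c → ∀ p : Fin P,
      ‖(W0 + ∑ q, ∑ t ∈ Finset.range c, U q t) -
          (W0 + ∑ q, ∑ t ∈ Finset.range (τ p q c + 1), U q t)‖ ≤
        P * s * η (c - s) * G) ∧
    Tendsto
      (fun c : ℕ =>
        Finset.univ.sup' (Finset.univ_nonempty_iff.mpr ⟨⟨0, hP⟩⟩)
          (fun p : Fin P =>
            ‖(W0 + ∑ q, ∑ t ∈ Finset.range c, U q t) -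
              (W0 + ∑ q, ∑ t ∈ Finset.range (τ p q c + 1), U q t)‖))
      atTop (nhds 0) := by
  have key : ∀ c, s < c → ∀ p : Fin P,
      ‖(W0 + ∑ q, ∑ t ∈ Finset.range c, U q t) -
          (W0 + ∑ q, ∑ t ∈ Finset.range (τ p q c + 1), U q t)‖ ≤
        P * s * η (c - s) * G := by
    intro c hc p
    rw [add_sub_add_left_eq_sub]
    have h := norm_sum_sum_range_sub_sum_sum_range_le (hdec.mul_const hG) hU
      (k := fun q => τ p q c + 1) (c := c) (s := s)
      (fun q => by have := (hτ p q c hc).1; omega)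
      (fun q => by have := (hτ p q c hc).2; omega)
      (mul_nonneg (hη _) hG)
    simpa only [Fintype.card_fin, mul_assoc] using h
  have hbound : Tendsto (fun c : ℕ => (P : ℝ) * s * η (c - s) * G) atTop (nhds 0) := by
    simpa using ((hη0.comp (tendsto_sub_atTop_nat s)).const_mul ((P : ℝ) * s)).mul_const G
  refine ⟨key, tendsto_of_tendsto_of_tendsto_of_le_of_le' tendsto_const_nhds hbound ?_ ?_⟩
  · exact Eventually.of_forall fun c =>
      Finset.le_sup'_of_le _ (Finset.mem_univ ⟨0, hP⟩) (norm_nonneg _)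
  · filter_upwards [eventually_gt_atTop s] with c hc
    exact Finset.sup'_le _ _ fun p _ => key c hc p
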